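/- Let J be compactly supported, continuous, positive on a neighborhood of ρ(ν)ν where ρ(ν) = sup{ r > 0 : J(rν) > 0 } and ν is a fixed unit vector. Then along the direction ν, liminf_{|p|→∞, p/|p| = ν} ln(p · DH^ess(p)) / (ρ(ν)|p|) ≥ 1. -/

import Mathlib

open MeasureTheory Real Set Filter
open scoped RealInnerProductSpace

/-!
Let `f(s) = p · DH^ess(p)` at `p = s ν`. Near a point `r ν` with `r` close to `ρ(ν)` and
`J (r ν) > 0`, continuity gives a small ball on which `J` is bounded below and `⟪ν, y⟫ ≥ a`
for some `a` close to `r`; since `t eᵗ ≥ -1`, the rest of the integral is at least `-∫ J`,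
so `f(s) ≳ s a e^{s a}` and `log f(s) / (ρ(ν) s) ≥ a / ρ(ν)` eventually. Compactness of the
support bounds `f(s)` by `e^{2 s R} ∫ J`, which makes the `liminf` meaningful.
-/

namespace Real

theorem neg_one_le_mul_exp (t : ℝ) : -1 ≤ t * exp t := by
  have h := mul_exp_neg_le_exp_neg_one (-t)
  rw [neg_neg] at h
  linarith [exp_le_one_iff.2 (by norm_num : (-1 : ℝ) ≤ 0)]

theorem mul_exp_le_exp_two_mul (t : ℝ) : t * exp t ≤ exp (2 * t) := by
  calc t * exp t ≤ exp t * exp t :=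
        mul_le_mul_of_nonneg_right (by linarith [add_one_le_exp t]) (exp_pos t).le
    _ = exp (2 * t) := by rw [← exp_add, two_mul]

theorem mul_exp_le_mul_exp {t u : ℝ} (ht : 0 ≤ t) (htu : t ≤ u) : t * exp t ≤ u * exp u :=
  mul_le_mul htu (exp_le_exp.2 htu) (exp_pos t).le (ht.trans htu)

end Real

theorem eventually_exp_le_of_mul_exp_sub_le {f : ℝ → ℝ} {A a b C : ℝ} (hA : 0 < A)
    (hb : 0 ≤ b) (hab : a ≤ b) (hf : ∀ s ≥ 0, A * s * exp (b * s) - C ≤ f s) :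
    ∀ᶠ s in atTop, exp (a * s) ≤ f s := by
  filter_upwards [eventually_ge_atTop ((|C| + 1) / A), eventually_ge_atTop 0] with s hsC hs
  have hAs : |C| + 1 ≤ A * s := (div_le_iff₀' hA).1 hsC
  have hexp : exp (a * s) ≤ exp (b * s) := exp_le_exp.2 (mul_le_mul_of_nonneg_right hab hs)
  have hone : 1 ≤ exp (b * s) := one_le_exp (mul_nonneg hb hs)
  nlinarith [hf s hs, le_abs_self C, mul_le_mul_of_nonneg_right hAs (exp_pos (b * s)).le,
    mul_le_mul_of_nonneg_left hone (abs_nonneg C)]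

theorem one_le_liminf_log_div_mul {f : ℝ → ℝ} {ρ C K : ℝ} (hρ : 0 < ρ)
    (hlow : ∀ a < ρ, ∀ᶠ s in atTop, exp (a * s) ≤ f s)
    (hup : ∀ᶠ s in atTop, f s ≤ C * exp (K * s)) :
    1 ≤ liminf (fun s => log (f s) / (ρ * s)) atTop := by
  have hlog : ∀ a < ρ, ∀ᶠ s in atTop, a * s ≤ log (f s) := fun a ha => by
    filter_upwards [hlow a ha] with s hs
    simpa only [log_exp] using log_le_log (exp_pos _) hs
  have hbdd : ∀ᶠ s in atTop, log (f s) / (ρ * s) ≤ (|C| + K) / ρ := by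
    filter_upwards [hlow 0 hρ, hup, eventually_ge_atTop 1] with s hpos hs hs1
    rw [zero_mul, exp_zero] at hpos
    have hC : 0 < C := pos_of_mul_pos_left (by linarith) (exp_pos _).le
    have hlogf : log (f s) ≤ log C + K * s := by
      simpa only [log_mul hC.ne' (exp_pos _).ne', log_exp] using
        log_le_log (by linarith) hs
    have hlin : log (f s) ≤ (|C| + K) * s := by
      linarith [log_le_sub_one_of_pos hC, le_abs_self C,
        le_mul_of_one_le_right (abs_nonneg C) hs1]
    rw [div_le_div_iff₀ (by positivity) hρ]
    nlinarith [mul_le_mul_of_nonneg_right hlin hρ.le]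
  refine le_of_forall_lt fun c hc => ?_
  calc c < (c + 1) / 2 := by linarith
    _ ≤ _ := le_liminf_of_le (IsBoundedUnder.isCoboundedUnder_ge ⟨_, hbdd⟩) <| by
      filter_upwards [hlog ((c + 1) / 2 * ρ) (by nlinarith), eventually_gt_atTop 0] with s hs hs0
      rw [le_div_iff₀ (by positivity)]
      linarith

section InnerGradH

variable {E : Type*} [NormedAddCommGroup E] [InnerProductSpace ℝ E] {J : E → ℝ}

theorem sub_lt_inner_of_mem_ball {ν y : E} {r δ : ℝ} (hν : ‖ν‖ = 1)
    (hy : y ∈ Metric.ball (r • ν) δ) : r - δ < ⟪ν, y⟫ := by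
  have hdist : ‖y - r • ν‖ < δ := by rwa [← dist_eq_norm]
  have hinner : ⟪ν, y⟫ = r + ⟪ν, y - r • ν⟫ := by
    rw [inner_sub_right, real_inner_smul_right, real_inner_self_eq_norm_sq, hν]
    ring
  have hcs : -‖y - r • ν‖ ≤ ⟪ν, y - r • ν⟫ := by
    simpa [hν] using neg_le_of_abs_le (abs_real_inner_le_norm ν (y - r • ν))
  linarith

theorem le_of_isLUB_of_pos_on_ball {ν : E} (hν : ‖ν‖ = 1) {ρ₀ ρ : ℝ} (hρ₀ : 0 < ρ₀)
    (hJpos : ∀ y ∈ Metric.ball 0 ρ₀ \ {0}, 0 < J y)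
    (hρ : IsLUB {r : ℝ | 0 < r ∧ 0 < J (r • ν)} ρ) : ρ₀ ≤ ρ := by
  refine (isLUB_Ioo hρ₀).mono hρ fun r ⟨hr0, hrρ₀⟩ => ⟨hr0, hJpos _ ⟨?_, ?_⟩⟩
  · simpa [norm_smul, hν, abs_of_pos hr0] using hrρ₀
  · have hν0 : ν ≠ 0 := by rintro rfl; simp at hν
    simpa [hr0.ne'] using hν0

variable [MeasurableSpace E] {μ : Measure E}

/-- `p · ∇H(p)` for `H(p) = ∫_S e^{⟪p, y⟫} J y dμ`; the paper's `p · DH^ess(p)` is the case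
`S = {y | ρ₀ / 2 < ‖y‖}`. -/
noncomputable def innerGradH (μ : Measure E) (J : E → ℝ) (S : Set E) (p : E) : ℝ :=
  ∫ y in S, ⟪p, y⟫ * exp ⟪p, y⟫ * J y ∂μ

theorem integrable_inner_mul_exp_mul [BorelSpace E] [IsFiniteMeasureOnCompacts μ]
    (hJ : Continuous J) (hJcs : HasCompactSupport J) (p : E) :
    Integrable (fun y => ⟪p, y⟫ * exp ⟪p, y⟫ * J y) μ :=
  (by fun_prop : Continuous fun y => ⟪p, y⟫ * exp ⟪p, y⟫ * J y).integrable_of_hasCompactSupport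
    hJcs.mul_left

theorem innerGradH_le {S : Set E} {R : ℝ} (hJ : Integrable J μ) (hJnn : ∀ y, 0 ≤ J y)
    (hR : Function.support J ⊆ Metric.closedBall 0 R) (p : E)
    (hf : Integrable (fun y => ⟪p, y⟫ * exp ⟪p, y⟫ * J y) μ) :
    innerGradH μ J S p ≤ exp (2 * (‖p‖ * R)) * ∫ y, J y ∂μ := by
  have hpt : ∀ y, ⟪p, y⟫ * exp ⟪p, y⟫ * J y ≤ exp (2 * (‖p‖ * R)) * J y := fun y => by
    rcases eq_or_ne (J y) 0 with hy | hy
    · simp [hy]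
    have hyR : ‖y‖ ≤ R := by simpa using hR hy
    have hinner : ⟪p, y⟫ ≤ ‖p‖ * R :=
      (real_inner_le_norm p y).trans (mul_le_mul_of_nonneg_left hyR (norm_nonneg p))
    refine mul_le_mul_of_nonneg_right ?_ (hJnn y)
    exact (mul_exp_le_exp_two_mul _).trans (exp_le_exp.2 (by linarith))
  calc innerGradH μ J S p ≤ ∫ y in S, exp (2 * (‖p‖ * R)) * J y ∂μ :=
        integral_mono hf.restrict (hJ.const_mul _).restrict hpt
    _ = exp (2 * (‖p‖ * R)) * ∫ y in S, J y ∂μ := integral_const_mul _ _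
    _ ≤ exp (2 * (‖p‖ * R)) * ∫ y, J y ∂μ :=
        mul_le_mul_of_nonneg_left
          (setIntegral_le_integral hJ (Eventually.of_forall hJnn)) (exp_pos _).le

theorem mul_measureReal_sub_integral_le_innerGradH {S B : Set E} {p : E} {t c : ℝ}
    (hB : MeasurableSet B) (hBS : B ⊆ S) (hBfin : μ B ≠ ⊤) (hJ : Integrable J μ)
    (hJnn : ∀ y, 0 ≤ J y) (hf : Integrable (fun y => ⟪p, y⟫ * exp ⟪p, y⟫ * J y) μ)
    (ht : 0 ≤ t) (hc : 0 ≤ c) (htB : ∀ y ∈ B, t ≤ ⟪p, y⟫) (hcB : ∀ y ∈ B, c ≤ J y) :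
    c * (t * exp t) * μ.real B - ∫ y, J y ∂μ ≤ innerGradH μ J S p := by
  have hsplit := integral_add_compl hB (hf.restrict (s := S))
  rw [Measure.restrict_restrict hB, inter_eq_left.2 hBS] at hsplit
  have hball : c * (t * exp t) * μ.real B ≤ ∫ y in B, ⟪p, y⟫ * exp ⟪p, y⟫ * J y ∂μ := by
    refine setIntegral_ge_of_const_le_real hB hBfin (fun y hy => ?_) hf.integrableOn
    rw [mul_comm c]
    exact mul_le_mul (mul_exp_le_mul_exp ht (htB y hy)) (hcB y hy) hc
      (mul_nonneg (ht.trans (htB y hy)) (exp_pos _).le)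
  have hrest : -∫ y, J y ∂μ ≤ ∫ y in Bᶜ, ⟪p, y⟫ * exp ⟪p, y⟫ * J y ∂μ.restrict S := by
    have hle : (μ.restrict S).restrict Bᶜ ≤ μ :=
      Measure.restrict_le_self.trans Measure.restrict_le_self
    calc -∫ y, J y ∂μ ≤ -∫ y in Bᶜ, J y ∂μ.restrict S :=
          neg_le_neg (integral_mono_measure hle (Eventually.of_forall hJnn) hJ)
      _ = ∫ y in Bᶜ, -J y ∂μ.restrict S := (integral_neg _).symm
      _ ≤ _ := integral_mono hJ.neg.restrict.restrict hf.restrict.restrict fun y => by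
          nlinarith [neg_one_le_mul_exp ⟪p, y⟫, hJnn y]
  unfold innerGradH
  linarith

theorem exists_mul_exp_sub_le_innerGradH [BorelSpace E] [ProperSpace E] [μ.IsOpenPosMeasure]
    [IsFiniteMeasureOnCompacts μ] (hJ : Continuous J) (hJcs : HasCompactSupport J)
    (hJnn : ∀ y, 0 ≤ J y) {ν : E} (hν : ‖ν‖ = 1) {ρ m r : ℝ} (hρm : ρ ≤ m) (hm : 0 ≤ m)
    (hmr : m < r) (hJr : 0 < J (r • ν)) :
    ∃ a > m, ∃ A > 0, ∀ s ≥ 0,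
      A * s * exp (a * s) - ∫ y, J y ∂μ ≤ innerGradH μ J {y | ρ < ‖y‖} (s • ν) := by
  obtain ⟨δ, hδ, hJball⟩ := Metric.isOpen_iff.1 (isOpen_lt continuous_const hJ) (r • ν)
    (show J (r • ν) / 2 < J (r • ν) by linarith)
  -- `δ' < r - m` keeps the whole ball in the half-space `⟪ν, y⟫ > m`
  set δ' := min δ ((r - m) / 2)
  have hδ' : 0 < δ' := lt_min hδ (by linarith)
  set B := Metric.ball (r • ν) δ'
  have hνB : ∀ y ∈ B, r - δ' ≤ ⟪ν, y⟫ := fun y hy => (sub_lt_inner_of_mem_ball hν hy).le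
  have ham : m < r - δ' := by linarith [min_le_right δ ((r - m) / 2)]
  have hBS : B ⊆ {y | ρ < ‖y‖} := fun y hy => by
    have := (real_inner_le_norm ν y).trans_eq (by rw [hν, one_mul])
    exact lt_of_le_of_lt hρm (ham.trans_le ((hνB y hy).trans this))
  have hVpos : 0 < μ.real B :=
    ENNReal.toReal_pos (Metric.measure_ball_pos μ _ hδ').ne' measure_ball_lt_top.ne
  refine ⟨r - δ', ham, J (r • ν) / 2 * (r - δ') * μ.real B,
    mul_pos (mul_pos (by linarith) (by linarith)) hVpos, fun s hs => ?_⟩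
  have hlow := mul_measureReal_sub_integral_le_innerGradH (t := s * (r - δ'))
    (c := J (r • ν) / 2) Metric.isOpen_ball.measurableSet hBS measure_ball_lt_top.ne
    (hJ.integrable_of_hasCompactSupport (μ := μ) hJcs) hJnn
    (integrable_inner_mul_exp_mul hJ hJcs _)
    (mul_nonneg hs (by linarith)) (by linarith)
    (fun y hy => by
      rw [real_inner_smul_left]; exact mul_le_mul_of_nonneg_left (hνB y hy) hs)
    (fun y hy => (hJball (Metric.ball_subset_ball (min_le_left _ _) hy)).le)
  convert hlow using 2
  rw [mul_comm (r - δ') s]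
  ring

end InnerGradH

theorem stmt_14_general {N : ℕ}
    (J : EuclideanSpace ℝ (Fin N) → ℝ) (ρ₀ : ℝ) (hρ₀ : 0 < ρ₀)
    (hJnn : ∀ y, 0 ≤ J y)
    (hJcont : Continuous J)
    (hJcs : HasCompactSupport J)
    (hJpos : ∀ y ∈ Metric.ball (0 : EuclideanSpace ℝ (Fin N)) ρ₀ \ {0}, 0 < J y)
    (ν : EuclideanSpace ℝ (Fin N)) (hν : ‖ν‖ = 1)
    (ρν : ℝ)
    (hρν : IsLUB {r : ℝ | 0 < r ∧ 0 < J (r • ν)} ρν) :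
    1 ≤ Filter.liminf
      (fun s : ℝ =>
        Real.log (∫ y in {y : EuclideanSpace ℝ (Fin N) | ρ₀ / 2 < ‖y‖},
          ⟪s • ν, y⟫ * Real.exp ⟪s • ν, y⟫ * J y) / (ρν * s))
      Filter.atTop := by
  change 1 ≤ liminf (fun s => log (innerGradH volume J {y | ρ₀ / 2 < ‖y‖} (s • ν)) / (ρν * s))
    atTop
  have hρ₀ν : ρ₀ ≤ ρν := le_of_isLUB_of_pos_on_ball hν hρ₀ hJpos hρν
  obtain ⟨R, hR⟩ := hJcs.isBounded.subset_closedBall 0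
  refine one_le_liminf_log_div_mul (C := ∫ y, J y) (K := 2 * R) (by linarith)
    (fun a ha => ?_) ?_
  · obtain ⟨r, ⟨-, hJr⟩, hmr, -⟩ :=
      hρν.exists_between (max_lt ha (by linarith) : max a (ρ₀ / 2) < ρν)
    have hm : 0 ≤ max a (ρ₀ / 2) := le_max_of_le_right (by linarith)
    obtain ⟨b, hb, A, hA, hlow⟩ := exists_mul_exp_sub_le_innerGradH (μ := volume) hJcont hJcs
      hJnn hν (le_max_right a _) hm hmr hJr
    exact eventually_exp_le_of_mul_exp_sub_le hA (hm.trans hb.le)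
      ((le_max_left _ _).trans hb.le) hlow
  · filter_upwards [eventually_ge_atTop 0] with s hs
    have hbound := innerGradH_le (S := {y | ρ₀ / 2 < ‖y‖})
      (hJcont.integrable_of_hasCompactSupport (μ := volume) hJcs) hJnn
      ((subset_tsupport J).trans hR) (s • ν)
      (integrable_inner_mul_exp_mul (μ := volume) hJcont hJcs _)
    rwa [norm_smul, hν, mul_one, norm_of_nonneg hs, mul_comm (exp _),
      show 2 * (s * R) = 2 * R * s by ring] at hbound

/-- for a compactly supported continuous kernel, along the direction `ν`,
`liminf_{s→∞} ln(p·DH^ess(p)) / (ρ(ν) s) ≥ 1` where `p = s ν` and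
`ρ(ν) = sup{r > 0 : J(rν) > 0}`. -/
theorem stmt_14 {N : ℕ}
    (J : EuclideanSpace ℝ (Fin N) → ℝ) (ρ₀ : ℝ) (hρ₀ : 0 < ρ₀)
    (hJnn : ∀ y, 0 ≤ J y)
    (hJcont : Continuous J)
    (hJcs : HasCompactSupport J)
    (hJpos : ∀ y ∈ Metric.ball (0 : EuclideanSpace ℝ (Fin N)) ρ₀ \ {0}, 0 < J y)
    (hint : Integrable (fun y => min 1 (‖y‖ ^ 2) * J y))
    (ν : EuclideanSpace ℝ (Fin N)) (hν : ‖ν‖ = 1)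
    (ρν : ℝ)
    (hρν : IsLUB {r : ℝ | 0 < r ∧ 0 < J (r • ν)} ρν) :
    1 ≤ Filter.liminf
      (fun s : ℝ =>
        Real.log (∫ y in {y : EuclideanSpace ℝ (Fin N) | ρ₀ / 2 < ‖y‖},
          ⟪s • ν, y⟫ * Real.exp ⟪s • ν, y⟫ * J y) / (ρν * s))
      Filter.atTop :=
  stmt_14_general J ρ₀ hρ₀ hJnn hJcont hJcs hJpos ν hν ρν hρν
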